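/- For every type σ and every function f in B(σB): B̂(∀σ) f = 1 if and only if f c = 1 for every c in Bσ. -/

import Mathlib

namespace PTT


/-- Simple types over a single base type `B`. -/
inductive Ty : Type
  | base : Ty
  | arrow : Ty → Ty → Ty
deriving DecidableEq

/-- Names: the constants `⊥` and `→`, and variables (an index together with a type). -/
inductive Name : Type
  | bot : Name
  | imp : Name
  | var : ℕ → Ty → Name
deriving DecidableEq

/-- The type of a name. -/
def Name.ty : Name → Ty
  | .bot => .base
  | .imp => .arrow .base (.arrow .base .base)
  | .var _ σ => σ

/-- Terms: names, abstraction over a variable, application. -/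
inductive Tm : Type
  | name : Name → Tm
  | lam : ℕ → Ty → Tm → Tm
  | app : Tm → Tm → Tm
deriving DecidableEq

/-- The term `⊥`. -/
def botTm : Tm := .name .bot

/-- The variable `(n, σ)` as a term. -/
def vr (n : ℕ) (σ : Ty) : Tm := .name (.var n σ)

/-- Implication `s → t`. -/
def impTm (s t : Tm) : Tm := .app (.app (.name .imp) s) t

/-- `⊤ := ⊥ → ⊥`. -/
def topTm : Tm := impTm botTm botTm

/-- `¬ s := s → ⊥`. -/
def negTm (s : Tm) : Tm := impTm s botTm

/-- `s ∨ t := (s → t) → t`. -/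
def orTm (s t : Tm) : Tm := impTm (impTm s t) t

/-- `s ∧ t := ¬(¬s ∨ ¬t)`. -/
def andTm (s t : Tm) : Tm := negTm (orTm (negTm s) (negTm t))

/-- `s ≡ t := (s → t) ∧ (t → s)`. -/
def equivTm (s t : Tm) : Tm := andTm (impTm s t) (impTm t s)

/-- The typing relation. -/
inductive HasTy : Tm → Ty → Prop
  | name (x : Name) : HasTy (.name x) x.ty
  | lam {n σ s τ} : HasTy s τ → HasTy (.lam n σ s) (.arrow σ τ)
  | app {s t σ τ} : HasTy s (.arrow σ τ) → HasTy t σ → HasTy (.app s t) τ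

/-- Free variables of a term. -/
def fv : Tm → Finset (ℕ × Ty)
  | .name (.var n σ) => {(n, σ)}
  | .name _ => ∅
  | .lam n σ s => (fv s).erase (n, σ)
  | .app s t => fv s ∪ fv t

/-- A term is closed if it has no free variables. -/
def Closed (s : Tm) : Prop := fv s = ∅

/-- Capture-free parallel substitution (bound variables are renamed). -/
def substAux (ρ : ℕ × Ty → Tm) : Tm → Tm
  | .name (.var n σ) => ρ (n, σ)
  | .name x => .name x
  | .app s t => .app (substAux ρ s) (substAux ρ t)
  | .lam n σ s =>
      let used : Finset ℕ :=
        ((fv s).erase (n, σ)).biUnion (fun p => (fv (ρ p)).image Prod.fst)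
      let m : ℕ := used.sup id + 1
      .lam m σ (substAux (Function.update ρ (n, σ) (vr m σ)) s)

/-- Capture-free substitution `s[(n,σ) := t]`. -/
def subst (s : Tm) (n : ℕ) (σ : Ty) (t : Tm) : Tm :=
  substAux (Function.update (fun p => vr p.1 p.2) (n, σ) t) s

/-- Contexts: terms with exactly one hole (possibly under binders). -/
inductive Ctx : Type
  | hole : Ctx
  | lam : ℕ → Ty → Ctx → Ctx
  | appL : Ctx → Tm → Ctx
  | appR : Tm → Ctx → Ctx

/-- Filling the hole of a context with a term (capturing is allowed). -/
def Ctx.fill : Ctx → Tm → Tm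
  | .hole, s => s
  | .lam n σ C, s => .lam n σ (C.fill s)
  | .appL C t, s => .app (C.fill s) t
  | .appR t C, s => .app t (C.fill s)

/-- `C` captures the variable `p` if the hole of `C` lies below a binder for `p`. -/
def Ctx.captures : Ctx → ℕ × Ty → Prop
  | .hole, _ => False
  | .lam n σ C, p => p = (n, σ) ∨ C.captures p
  | .appL C _, p => C.captures p
  | .appR _ C, p => C.captures p

/-- `C` is admissible for `A` if it captures no variable free in `A`. -/
def Ctx.Admissible (C : Ctx) (A : Finset Tm) : Prop :=
  ∀ p ∈ A.biUnion fv, ¬ C.captures p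

/-- `s` is a subterm of `t`. -/
def Subterm (s t : Tm) : Prop := ∃ C : Ctx, C.fill s = t

/-- β-redexes. -/
def IsBetaRedex : Tm → Prop
  | .app (.lam _ _ _) _ => True
  | _ => False

/-- A term is β-normal if none of its subterms is a β-redex. -/
def BetaNormal (t : Tm) : Prop := ∀ s, Subterm s t → ¬ IsBetaRedex s

/-- Lambda equivalence: the least equivalence on well-typed terms containing
α-, β-, η-conversion and closed under arbitrary contexts. -/
inductive LamEq : Tm → Tm → Prop
  | refl {s σ} : HasTy s σ → LamEq s s
  | symm {s t} : LamEq s t → LamEq t s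
  | trans {s t u} : LamEq s t → LamEq t u → LamEq s u
  | alpha {n m σ s τ} : HasTy (.lam n σ s) τ → (m, σ) ∉ fv s →
      LamEq (.lam n σ s) (.lam m σ (subst s n σ (vr m σ)))
  | beta {n σ s t τ} : HasTy (.app (.lam n σ s) t) τ →
      LamEq (.app (.lam n σ s) t) (subst s n σ t)
  | eta {n σ s τ} : HasTy (.lam n σ (.app s (vr n σ))) τ → (n, σ) ∉ fv s →
      LamEq (.lam n σ (.app s (vr n σ))) s
  | ctx {s t σ} (C : Ctx) : LamEq s t → HasTy (C.fill s) σ → LamEq (C.fill s) (C.fill t)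

/-- The standard set-theoretic interpretation of types: `B` is interpreted as the
two truth values (`Bool`), functional types as full function spaces. -/
def Ty.sem : Ty → Type
  | .base => Bool
  | .arrow σ τ => σ.sem → τ.sem

def Ty.semDefault : (σ : Ty) → σ.sem
  | .base => false
  | .arrow _ τ => fun _ => τ.semDefault

instance (σ : Ty) : Inhabited σ.sem := ⟨σ.semDefault⟩

noncomputable instance Ty.semFintype : (σ : Ty) → Fintype σ.sem
  | .base => inferInstanceAs (Fintype Bool)
  | .arrow σ τ =>
      letI := Ty.semFintype σ
      letI := Ty.semFintype τ
      letI := Classical.decEq σ.sem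
      inferInstanceAs (Fintype (σ.sem → τ.sem))

def Ty.semCast {σ τ : Ty} (h : σ = τ) (v : σ.sem) : τ.sem := h ▸ v

/-- An interpretation assigns to every variable a value of the corresponding type
(the constants `⊥` and `→` have their values fixed). -/
def Interp : Type := ℕ → (σ : Ty) → σ.sem

def Interp.update (I : Interp) (n : ℕ) (σ : Ty) (v : σ.sem) : Interp :=
  fun m τ => if h : m = n ∧ τ = σ then Ty.semCast h.2.symm v else I m τ

/-- Type inference. -/
def typeOf : Tm → Option Ty
  | .name x => some x.ty
  | .lam _ σ s => (typeOf s).map (Ty.arrow σ)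
  | .app s t =>
      match typeOf s, typeOf t with
      | some (.arrow σ τ), some σ' => if σ = σ' then some τ else none
      | _, _ => none

/-- The canonical extension `Î` of an interpretation to all terms: `eval I s σ`
is the value of `s` at type `σ` (on well-typed terms this is the usual
denotation; junk default values are used at type mismatches). -/
def eval (I : Interp) : Tm → (σ : Ty) → σ.sem
  | .name (.var n τ), σ => if h : τ = σ then Ty.semCast h (I n τ) else default
  | .name .bot, σ =>
      match σ with
      | .base => false
      | _ => default
  | .name .imp, σ =>
      match σ with
      | .arrow .base (.arrow .base .base) => fun a b => !a || b
      | _ => default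
  | .app s t, σ =>
      match typeOf t with
      | some τ => eval I s (.arrow τ σ) (eval I t τ)
      | none => default
  | .lam n τ s, σ =>
      match σ with
      | .base => default
      | .arrow σ₁ σ₂ =>
          if h : σ₁ = τ then
            fun a => eval (I.update n τ (Ty.semCast h a)) s σ₂
          else default

/-- `I` satisfies the formula `s` if `Î s = 1`. -/
def Satisfies (I : Interp) (s : Tm) : Prop := eval I s .base = true

/-- A formula is valid if every interpretation satisfies it. -/
def ValidFml (s : Tm) : Prop := ∀ I : Interp, Satisfies I s

/-- A sequent `A ⇒ s` is valid if every interpretation satisfying `A` satisfies `s`. -/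
def ValidSeq (A : Finset Tm) (s : Tm) : Prop :=
  ∀ I : Interp, (∀ t ∈ A, Satisfies I t) → Satisfies I s

/-- Finite disjunction (the empty disjunction is `⊥`). -/
def orList : List Tm → Tm
  | [] => botTm
  | [s] => s
  | s :: l => orTm s (orList l)

/-- Finite conjunction (the empty conjunction is `⊤`). -/
def andList : List Tm → Tm
  | [] => topTm
  | [s] => s
  | s :: l => andTm s (andList l)

/-- The argument types of a type (every type has the form `σ₁…σₙB`). -/
def Ty.args : Ty → List Ty
  | .base => []
  | .arrow σ τ => σ :: τ.args

/-- Tuples of values along a list of types. -/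
def Tup : List Ty → Type
  | [] => PUnit
  | σ :: l => σ.sem × Tup l

noncomputable instance TupFintype : (l : List Ty) → Fintype (Tup l)
  | [] => inferInstanceAs (Fintype PUnit)
  | σ :: l =>
      letI := TupFintype l
      inferInstanceAs (Fintype (σ.sem × Tup l))

/-- Applying a function value to a tuple of arguments (the result type is `B`). -/
def Ty.applyTup : (σ : Ty) → σ.sem → Tup σ.args → Bool
  | .base, a, _ => a
  | .arrow _ τ, f, p => τ.applyTup (f p.1) p.2

/-- Quote/identity data for each type in a list: a quote function and the term `≐`. -/
def ArgData : List Ty → Type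
  | [] => PUnit
  | σ :: l => ((σ.sem → Tm) × Tm) × ArgData l

/-- The conjunction list `x_k ≐_{σ_k} (↓_{σ_k} b_k), …` for a tuple `b`. -/
def eqConj : (l : List Ty) → ArgData l → ℕ → Tup l → List Tm
  | [], _, _, _ => []
  | σ :: l, (d, ds), k, (b, bs) =>
      (.app (.app d.2 (vr k σ)) (d.1 b)) :: eqConj l ds (k + 1) bs

/-- `λ x_k : σ_k. …` binding one variable for each type in the list. -/
def mkLams : (l : List Ty) → ℕ → Tm → Tm
  | [], _, body => body
  | σ :: l, k, body => .lam k σ (mkLams l (k + 1) body)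

/-- The body of the quote term
`↓_{σ₁…σₙB} a := λx₁…xₙ. ⋁_{b₁…bₙ, a b₁…bₙ = 1} ⋀_j x_j ≐_{σ_j} (↓_{σ_j} b_j)`. -/
noncomputable def quoteBodyAux (σ : Ty) (ad : ArgData σ.args) (a : σ.sem) : Tm :=
  mkLams σ.args 0 (orList
    ((((Finset.univ : Finset (Tup σ.args)).toList.filter
        (fun b => σ.applyTup a b))).map
      (fun b => andList (eqConj σ.args ad 0 b))))

/-- `∀σ := λf. ⋀_{a ∈ Bσ} f (↓σ a)`, given the quote function for `σ`. -/
noncomputable def allTmAux (σ : Ty) (q : σ.sem → Tm) : Tm :=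
  .lam 0 (.arrow σ .base)
    (andList (((Finset.univ : Finset σ.sem).toList).map
      (fun a => .app (vr 0 (.arrow σ .base)) (q a))))

mutual
  /-- The quote function `↓σ` together with the identity term `≐σ`. -/
  noncomputable def quoteEq : (σ : Ty) → ((σ.sem → Tm) × Tm)
    | .base =>
        (fun a => quoteBodyAux .base PUnit.unit a,
         .lam 0 .base (.lam 1 .base (equivTm (vr 0 .base) (vr 1 .base))))
    | .arrow σ τ =>
        (fun a => quoteBodyAux (.arrow σ τ) ((quoteEq σ, argData τ) : ArgData (σ :: τ.args)) a,
         .lam 0 (.arrow σ τ) (.lam 1 (.arrow σ τ)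
           (.app (allTmAux σ (quoteEq σ).1)
             (.lam 2 σ
               (.app (.app (quoteEq τ).2
                  (.app (vr 0 (.arrow σ τ)) (vr 2 σ)))
                (.app (vr 1 (.arrow σ τ)) (vr 2 σ)))))))
  /-- Quote/identity data for all argument types of a type. -/
  noncomputable def argData : (σ : Ty) → ArgData σ.args
    | .base => PUnit.unit
    | .arrow σ τ => ((quoteEq σ, argData τ) : ArgData (σ :: τ.args))
end

/-- The quote function `↓σ : Bσ → Λ`. -/
noncomputable def quote (σ : Ty) (a : σ.sem) : Tm := (quoteEq σ).1 a

/-- The term `≐σ : σσB` denoting the identity predicate on `Bσ`. -/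
noncomputable def eqTm (σ : Ty) : Tm := (quoteEq σ).2

/-- The term `∀σ : (σB)B`. -/
noncomputable def allTm (σ : Ty) : Tm := allTmAux σ (quote σ)


/-- Propositional formulas: `s ::= x | ⊥ | s → s` with `x` a variable of type `B`. -/
inductive Propositional : Tm → Prop
  | var (n : ℕ) : Propositional (vr n .base)
  | bot : Propositional botTm
  | imp {s t} : Propositional s → Propositional t → Propositional (impTm s t)

/-- A type-respecting substitution of terms for variables. -/
def IsSubstitution (ρ : ℕ × Ty → Tm) : Prop := ∀ n σ, HasTy (ρ (n, σ)) σ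

/-- A formula is tautologous if it is a substitution instance of a tautology
(a valid propositional formula). -/
def Tautologous (s : Tm) : Prop :=
  ∃ t ρ, Propositional t ∧ ValidFml t ∧ IsSubstitution ρ ∧ s = substAux ρ t

/-- The proof system: Triv, Weak, Ded, MP, DN, Lam and Boolean replacement (BR).
Sequents consist of a finite set of formulas and a formula. -/
inductive Ded : Finset Tm → Tm → Prop
  | triv {A s} : (∀ t ∈ A, HasTy t .base) → HasTy s .base → Ded (insert s A) s
  | weak {A s t} : HasTy s .base → Ded A t → Ded (insert s A) t
  | ded {A s t} : Ded (insert s A) t → Ded A (impTm s t)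
  | mp {A s t} : Ded A (impTm s t) → Ded A s → Ded A t
  | dn {A s} : Ded A (negTm (negTm s)) → Ded A s
  | lam {A s t} : Ded A s → LamEq s t → HasTy t .base → Ded A t
  | br {A s t} (C : Ctx) : C.Admissible A → Ded A (equivTm s t) →
      Ded A (C.fill s) → HasTy (C.fill t) .base → Ded A (C.fill t)


/-!
By one induction on `σ`, `↓σ a` is a term of type `σ` denoting `a` in every interpretation, and
`≐σ` denotes equality on `Bσ`. Applied to a tuple `b`, the denotation of `↓_{σ₁…σₙB} a` is the
disjunction, over the tuples `c` with `a c = 1`, of the conjunctions of `bⱼ = cⱼ` (induction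
hypothesis for `≐_{σⱼ}` and `↓_{σⱼ}`), which holds iff `a b = 1`. Once `↓σ` is known to quote
correctly, `∀σ f` denotes the conjunction of `f a` over all `a ∈ Bσ`; this gives both the theorem
and the case `≐_{στ} f g = ∀σ (λx. f x ≐τ g x)`.
-/

namespace Interp

variable {I : Interp} {n : ℕ} {σ : Ty} {v : σ.sem}

theorem update_same : I.update n σ v n σ = v := by
  simp [Interp.update, Ty.semCast]

theorem update_of_ne {m : ℕ} {τ : Ty} (h : ¬(m = n ∧ τ = σ)) :
    I.update n σ v m τ = I m τ := by
  rw [Interp.update, dif_neg h]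

end Interp

section Typing

theorem typeOf_vr (n : ℕ) (σ : Ty) : typeOf (vr n σ) = some σ := rfl

theorem typeOf_lam (n : ℕ) (σ : Ty) {s : Tm} {τ : Ty} (h : typeOf s = some τ) :
    typeOf (.lam n σ s) = some (.arrow σ τ) := by
  simp [typeOf, h]

theorem typeOf_app {s t : Tm} {σ τ : Ty} (hs : typeOf s = some (.arrow σ τ))
    (ht : typeOf t = some σ) : typeOf (.app s t) = some τ := by
  simp [typeOf, hs, ht]

end Typing

section Eval

variable (I : Interp)

theorem eval_vr (n : ℕ) (σ : Ty) : eval I (vr n σ) σ = I n σ := by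
  rw [vr, eval.eq_def]
  simp [Ty.semCast]

theorem eval_botTm : eval I botTm .base = false := by
  rw [botTm, eval.eq_def]

theorem eval_app (s : Tm) {t : Tm} {τ : Ty} (σ : Ty) (ht : typeOf t = some τ) :
    eval I (.app s t) σ = eval I s (.arrow τ σ) (eval I t τ) := by
  rw [eval.eq_def]
  simp [ht]

theorem eval_lam_apply (n : ℕ) (τ : Ty) (s : Tm) (σ : Ty) (a : τ.sem) :
    eval I (.lam n τ s) (.arrow τ σ) a = eval (I.update n τ a) s σ := by
  rw [eval.eq_def]
  exact congrFun (dif_pos rfl) a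

end Eval

section Connectives

variable (I : Interp) {s t : Tm}

theorem typeOf_impTm (hs : typeOf s = some .base) (ht : typeOf t = some .base) :
    typeOf (impTm s t) = some .base := by
  simp [impTm, typeOf, hs, ht, Name.ty]

theorem satisfies_impTm (hs : typeOf s = some .base) (ht : typeOf t = some .base) :
    Satisfies I (impTm s t) ↔ (Satisfies I s → Satisfies I t) := by
  have eval_imp : eval I (.name .imp) (.arrow .base (.arrow .base .base)) =
      fun a b => !a || b := by
    rw [eval.eq_def]; rfl
  simp only [Satisfies]
  rw [impTm, eval_app I _ _ ht, eval_app I _ _ hs, eval_imp]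
  -- `Ty.base.sem` is `Bool` only up to unfolding; restate at `Bool` to make the goal decidable.
  show @Eq Bool (!eval I s .base || eval I t .base) true ↔
    (@Eq Bool (eval I s .base) true → @Eq Bool (eval I t .base) true)
  cases (eval I s .base : Bool) <;> cases (eval I t .base : Bool) <;> decide

theorem typeOf_botTm : typeOf botTm = some .base := rfl

theorem not_satisfies_botTm : ¬ Satisfies I botTm := by
  simp [Satisfies, eval_botTm]

theorem typeOf_negTm (hs : typeOf s = some .base) : typeOf (negTm s) = some .base :=
  typeOf_impTm hs typeOf_botTm

theorem satisfies_negTm (hs : typeOf s = some .base) :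
    Satisfies I (negTm s) ↔ ¬ Satisfies I s := by
  simp only [negTm, satisfies_impTm I hs typeOf_botTm, not_satisfies_botTm]

theorem typeOf_orTm (hs : typeOf s = some .base) (ht : typeOf t = some .base) :
    typeOf (orTm s t) = some .base :=
  typeOf_impTm (typeOf_impTm hs ht) ht

theorem satisfies_orTm (hs : typeOf s = some .base) (ht : typeOf t = some .base) :
    Satisfies I (orTm s t) ↔ Satisfies I s ∨ Satisfies I t := by
  rw [orTm, satisfies_impTm I (typeOf_impTm hs ht) ht, satisfies_impTm I hs ht]
  tauto

theorem typeOf_andTm (hs : typeOf s = some .base) (ht : typeOf t = some .base) :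
    typeOf (andTm s t) = some .base :=
  typeOf_negTm (typeOf_orTm (typeOf_negTm hs) (typeOf_negTm ht))

theorem satisfies_andTm (hs : typeOf s = some .base) (ht : typeOf t = some .base) :
    Satisfies I (andTm s t) ↔ Satisfies I s ∧ Satisfies I t := by
  rw [andTm, satisfies_negTm I (typeOf_orTm (typeOf_negTm hs) (typeOf_negTm ht)),
    satisfies_orTm I (typeOf_negTm hs) (typeOf_negTm ht), satisfies_negTm I hs,
    satisfies_negTm I ht]
  tauto

theorem typeOf_equivTm (hs : typeOf s = some .base) (ht : typeOf t = some .base) :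
    typeOf (equivTm s t) = some .base :=
  typeOf_andTm (typeOf_impTm hs ht) (typeOf_impTm ht hs)

theorem satisfies_equivTm (hs : typeOf s = some .base) (ht : typeOf t = some .base) :
    Satisfies I (equivTm s t) ↔ (Satisfies I s ↔ Satisfies I t) := by
  rw [equivTm, satisfies_andTm I (typeOf_impTm hs ht) (typeOf_impTm ht hs),
    satisfies_impTm I hs ht, satisfies_impTm I ht hs]
  exact iff_iff_implies_and_implies.symm

theorem typeOf_orList {l : List Tm} (hl : ∀ s ∈ l, typeOf s = some .base) :
    typeOf (orList l) = some .base := by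
  induction l using orList.induct with
  | case1 => rfl
  | case2 s => exact hl s (List.mem_singleton_self s)
  | case3 s l hl₀ ih =>
    rw [orList.eq_3 s l hl₀]
    exact typeOf_orTm (hl s List.mem_cons_self)
      (ih fun u hu => hl u (List.mem_cons_of_mem s hu))

theorem satisfies_orList {l : List Tm} (hl : ∀ s ∈ l, typeOf s = some .base) :
    Satisfies I (orList l) ↔ ∃ s ∈ l, Satisfies I s := by
  induction l using orList.induct with
  | case1 => simp [orList, not_satisfies_botTm]
  | case2 s => simp [orList]
  | case3 s l hl₀ ih =>
    have hl' : ∀ u ∈ l, typeOf u = some .base := fun u hu => hl u (List.mem_cons_of_mem s hu)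
    rw [orList.eq_3 s l hl₀, satisfies_orTm I (hl s List.mem_cons_self) (typeOf_orList hl'),
      ih hl', List.exists_mem_cons_iff]

theorem typeOf_andList {l : List Tm} (hl : ∀ s ∈ l, typeOf s = some .base) :
    typeOf (andList l) = some .base := by
  induction l using andList.induct with
  | case1 => rfl
  | case2 s => exact hl s (List.mem_singleton_self s)
  | case3 s l hl₀ ih =>
    rw [andList.eq_3 s l hl₀]
    exact typeOf_andTm (hl s List.mem_cons_self)
      (ih fun u hu => hl u (List.mem_cons_of_mem s hu))

theorem satisfies_andList {l : List Tm} (hl : ∀ s ∈ l, typeOf s = some .base) :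
    Satisfies I (andList l) ↔ ∀ s ∈ l, Satisfies I s := by
  induction l using andList.induct with
  | case1 => simp [andList, topTm, satisfies_impTm I typeOf_botTm typeOf_botTm]
  | case2 s => simp [andList]
  | case3 s l hl₀ ih =>
    have hl' : ∀ u ∈ l, typeOf u = some .base := fun u hu => hl u (List.mem_cons_of_mem s hu)
    rw [andList.eq_3 s l hl₀, satisfies_andTm I (hl s List.mem_cons_self) (typeOf_andList hl'),
      ih hl', List.forall_mem_cons]

end Connectives

structure IsQuote (σ : Ty) (q : σ.sem → Tm) : Prop where
  typeOf_eq : ∀ a, typeOf (q a) = some σ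
  eval_eq : ∀ I a, eval I (q a) σ = a

structure IsEqTm (σ : Ty) (e : Tm) : Prop where
  typeOf_eq : typeOf e = some (.arrow σ (.arrow σ .base))
  eval_iff : ∀ I x y, eval I e (.arrow σ (.arrow σ .base)) x y = true ↔ x = y

structure IsQuoteEq (σ : Ty) (d : (σ.sem → Tm) × Tm) : Prop where
  quote : IsQuote σ d.1
  eq : IsEqTm σ d.2

def ArgData.Correct : (l : List Ty) → ArgData l → Prop
  | [], _ => True
  | σ :: l, (d, ds) => IsQuoteEq σ d ∧ ArgData.Correct l ds

def Interp.updateTup (I : Interp) : ℕ → (l : List Ty) → Tup l → Interp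
  | _, [], _ => I
  | k, σ :: l, (a, b) => (I.update k σ a).updateTup (k + 1) l b

theorem Interp.updateTup_of_lt {l : List Ty} (I : Interp) {k m : ℕ} (b : Tup l) (τ : Ty)
    (hm : m < k) : I.updateTup k l b m τ = I m τ := by
  induction l generalizing I k with
  | nil => rfl
  | cons σ l ih =>
    obtain ⟨a, b⟩ := b
    rw [updateTup, ih _ _ (by omega), update_of_ne]
    omega

theorem applyTup_injective (σ : Ty) : Function.Injective σ.applyTup := by
  induction σ with
  | base => intro x y h; exact congrFun h PUnit.unit
  | arrow σ τ _ ih =>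
    intro x y h
    funext a
    exact ih (funext fun b => congrFun h (a, b))

theorem typeOf_mkLams (σ : Ty) (k : ℕ) {body : Tm} (h : typeOf body = some .base) :
    typeOf (mkLams σ.args k body) = some σ := by
  induction σ generalizing k with
  | base => exact h
  | arrow σ τ _ ih => exact typeOf_lam k σ (ih (k + 1))

theorem applyTup_eval_mkLams (σ : Ty) (I : Interp) (k : ℕ) (body : Tm) (b : Tup σ.args) :
    σ.applyTup (eval I (mkLams σ.args k body) σ) b =
      eval (I.updateTup k σ.args b) body .base := by
  induction σ generalizing I k with
  | base => rfl
  | arrow σ τ _ ih =>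
    change τ.applyTup (eval I (.lam k σ (mkLams τ.args (k + 1) body)) (.arrow σ τ) b.1) b.2 = _
    rw [eval_lam_apply]
    exact ih _ _ b.2

theorem typeOf_of_mem_eqConj {l : List Ty} {ad : ArgData l} (had : ArgData.Correct l ad)
    {k : ℕ} {c : Tup l} {s : Tm} (hs : s ∈ eqConj l ad k c) : typeOf s = some .base := by
  induction l generalizing k with
  | nil => simp [eqConj] at hs
  | cons σ l ih =>
    obtain ⟨d, ds⟩ := ad
    obtain ⟨c, cs⟩ := c
    obtain ⟨hd, hds⟩ := had
    rcases List.mem_cons.mp hs with rfl | hs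
    · exact typeOf_app (typeOf_app hd.eq.typeOf_eq (typeOf_vr k σ)) (hd.quote.typeOf_eq c)
    · exact ih hds hs

theorem forall_satisfies_eqConj_iff {l : List Ty} {ad : ArgData l} (had : ArgData.Correct l ad)
    (I : Interp) (k : ℕ) (b c : Tup l) :
    (∀ s ∈ eqConj l ad k c, Satisfies (I.updateTup k l b) s) ↔ b = c := by
  induction l generalizing I k with
  | nil => exact iff_of_true (by simp [eqConj]) rfl
  | cons σ l ih =>
    obtain ⟨d, ds⟩ := ad
    obtain ⟨b, bs⟩ := b
    obtain ⟨c, cs⟩ := c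
    obtain ⟨hd, hds⟩ := had
    have head_iff : Satisfies ((I.update k σ b).updateTup (k + 1) l bs)
        (.app (.app d.2 (vr k σ)) (d.1 c)) ↔ b = c := by
      rw [Satisfies, eval_app _ _ _ (hd.quote.typeOf_eq c), eval_app _ _ _ (typeOf_vr k σ),
        hd.quote.eval_eq, eval_vr, Interp.updateTup_of_lt _ _ _ (Nat.lt_succ_self k),
        Interp.update_same]
      exact hd.eq.eval_iff _ b c
    change (∀ s ∈ _ :: eqConj l ds (k + 1) cs,
      Satisfies ((I.update k σ b).updateTup (k + 1) l bs) s) ↔ _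
    rw [List.forall_mem_cons, head_iff, ih hds]
    exact Prod.mk_inj.symm

theorem isQuote_quoteBodyAux {σ : Ty} {ad : ArgData σ.args} (had : ArgData.Correct σ.args ad) :
    IsQuote σ (quoteBodyAux σ ad) := by
  have typeOf_disjuncts : ∀ a, ∀ s ∈ ((Finset.univ : Finset (Tup σ.args)).toList.filter
      (fun c => σ.applyTup a c)).map (fun c => andList (eqConj σ.args ad 0 c)),
      typeOf s = some .base := by
    intro a s hs
    obtain ⟨c, -, rfl⟩ := List.mem_map.mp hs
    exact typeOf_andList fun _ => typeOf_of_mem_eqConj had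
  refine ⟨fun a => typeOf_mkLams σ 0 (typeOf_orList (typeOf_disjuncts a)), fun I a => ?_⟩
  refine applyTup_injective σ (funext fun b => ?_)
  rw [quoteBodyAux, applyTup_eval_mkLams]
  have satisfies_disjunct : ∀ c, Satisfies (I.updateTup 0 σ.args b)
      (andList (eqConj σ.args ad 0 c)) ↔ b = c := fun c => by
    rw [satisfies_andList _ fun _ => typeOf_of_mem_eqConj had,
      forall_satisfies_eqConj_iff had]
  refine Bool.eq_iff_iff.mpr ?_
  change Satisfies _ _ ↔ _
  simp only [satisfies_orList _ (typeOf_disjuncts a), List.mem_map, List.mem_filter,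
    Finset.mem_toList, Finset.mem_univ, true_and, exists_exists_and_eq_and, satisfies_disjunct,
    exists_eq_right']

section AllTm

variable {σ : Ty} {q : σ.sem → Tm}

theorem typeOf_of_mem_allTmAux_conjuncts (hq : IsQuote σ q) {s : Tm}
    (hs : s ∈ (Finset.univ : Finset σ.sem).toList.map
      fun a => .app (vr 0 (.arrow σ .base)) (q a)) :
    typeOf s = some .base := by
  obtain ⟨a, -, rfl⟩ := List.mem_map.mp hs
  exact typeOf_app (typeOf_vr 0 _) (hq.typeOf_eq a)

theorem typeOf_allTmAux (hq : IsQuote σ q) :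
    typeOf (allTmAux σ q) = some (.arrow (.arrow σ .base) .base) :=
  typeOf_lam _ _ <| typeOf_andList fun _ => typeOf_of_mem_allTmAux_conjuncts hq

theorem eval_allTmAux_eq_true_iff (hq : IsQuote σ q) (I : Interp) (f : (Ty.arrow σ .base).sem) :
    eval I (allTmAux σ q) (.arrow (.arrow σ .base) .base) f = true ↔ ∀ a, f a = true := by
  have satisfies_instance : ∀ a, Satisfies (I.update 0 (.arrow σ .base) f)
      (.app (vr 0 (.arrow σ .base)) (q a)) ↔ f a = true := fun a => by
    rw [Satisfies, eval_app _ _ _ (hq.typeOf_eq a), eval_vr, hq.eval_eq, Interp.update_same]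
  rw [allTmAux, eval_lam_apply]
  change Satisfies _ _ ↔ _
  rw [satisfies_andList _ fun _ => typeOf_of_mem_allTmAux_conjuncts hq]
  simp only [List.forall_mem_map, Finset.mem_toList, Finset.mem_univ, forall_const,
    satisfies_instance]

end AllTm

theorem isEqTm_base :
    IsEqTm .base (.lam 0 .base (.lam 1 .base (equivTm (vr 0 .base) (vr 1 .base)))) where
  typeOf_eq := typeOf_lam _ _ <| typeOf_lam _ _ <| typeOf_equivTm (typeOf_vr _ _) (typeOf_vr _ _)
  eval_iff I x y := by
    change Satisfies ((I.update 0 .base x).update 1 .base y) _ ↔ _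
    rw [satisfies_equivTm _ (typeOf_vr _ _) (typeOf_vr _ _), Satisfies, Satisfies, eval_vr,
      eval_vr, Interp.update_same, Interp.update_of_ne (by simp), Interp.update_same]
    exact Bool.eq_iff_iff.symm

theorem isEqTm_arrow {σ τ : Ty} {q : σ.sem → Tm} {e : Tm} (hq : IsQuote σ q)
    (he : IsEqTm τ e) :
    IsEqTm (.arrow σ τ)
      (.lam 0 (.arrow σ τ) (.lam 1 (.arrow σ τ)
        (.app (allTmAux σ q)
          (.lam 2 σ
            (.app (.app e (.app (vr 0 (.arrow σ τ)) (vr 2 σ)))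
              (.app (vr 1 (.arrow σ τ)) (vr 2 σ))))))) := by
  have typeOf_fx : typeOf (.app (vr 0 (.arrow σ τ)) (vr 2 σ)) = some τ :=
    typeOf_app (typeOf_vr _ _) (typeOf_vr _ _)
  have typeOf_gx : typeOf (.app (vr 1 (.arrow σ τ)) (vr 2 σ)) = some τ :=
    typeOf_app (typeOf_vr _ _) (typeOf_vr _ _)
  have satisfies_pointwise {J : Interp} {f g : σ.sem → τ.sem} {a : σ.sem}
      (hf : J 0 (.arrow σ τ) = f) (hg : J 1 (.arrow σ τ) = g) (ha : J 2 σ = a) :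
      Satisfies J (.app (.app e (.app (vr 0 (.arrow σ τ)) (vr 2 σ)))
        (.app (vr 1 (.arrow σ τ)) (vr 2 σ))) ↔ f a = g a := by
    subst hf hg ha
    rw [Satisfies, eval_app _ _ _ typeOf_gx, eval_app _ _ _ typeOf_fx,
      eval_app _ _ _ (typeOf_vr _ _), eval_app _ _ _ (typeOf_vr _ _), eval_vr, eval_vr, eval_vr]
    exact he.eval_iff J _ _
  have typeOf_pointwise :=
    typeOf_lam 2 σ (typeOf_app (typeOf_app he.typeOf_eq typeOf_fx) typeOf_gx)
  refine ⟨typeOf_lam _ _ <| typeOf_lam _ _ <| typeOf_app (typeOf_allTmAux hq) typeOf_pointwise,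
    fun I f g => ?_⟩
  rw [eval_lam_apply, eval_lam_apply, eval_app _ _ _ typeOf_pointwise,
    eval_allTmAux_eq_true_iff hq]
  show _ ↔ @Eq (σ.sem → τ.sem) f g
  refine (forall_congr' fun a => ?_).trans funext_iff.symm
  rw [eval_lam_apply]
  refine satisfies_pointwise ?_ ?_ Interp.update_same
  · rw [Interp.update_of_ne (by simp), Interp.update_of_ne (by simp),
      Interp.update_same]
  · rw [Interp.update_of_ne (by simp), Interp.update_same]

theorem isQuoteEq_quoteEq (σ : Ty) :
    IsQuoteEq σ (quoteEq σ) ∧ ArgData.Correct σ.args (argData σ) := by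
  induction σ with
  | base =>
    rw [quoteEq, argData]
    exact ⟨⟨isQuote_quoteBodyAux trivial, isEqTm_base⟩, trivial⟩
  | arrow σ τ ihσ ihτ =>
    have had : ArgData.Correct (σ :: τ.args) (quoteEq σ, argData τ) := ⟨ihσ.1, ihτ.2⟩
    rw [quoteEq, argData]
    exact ⟨⟨isQuote_quoteBodyAux had, isEqTm_arrow ihσ.1.quote ihτ.1.eq⟩, had⟩

/-- `B̂(∀σ) f = 1` iff `f c = 1` for every `c ∈ Bσ`. -/
theorem allTm_denotes (σ : Ty) (f : (Ty.arrow σ .base).sem) (I : Interp) :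
    eval I (allTm σ) (.arrow (.arrow σ .base) .base) f = true ↔
      ∀ c : σ.sem, f c = true :=
  eval_allTmAux_eq_true_iff (isQuoteEq_quoteEq σ).1.quote I f

end PTT
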